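/- Fix k ≥ 1. If q_1 and q_2 are both GHW(k)-overapproximations of a CQ q, then q_1 ≡ q_2. -/

import Mathlib

/-!
Common formalization of relational databases, conjunctive queries (CQs),
generalized hypertreewidth, existential cover (pebble) games, and
approximations of CQs, following Barceló, Romero, Zeume,
"A More General Theory of Static Approximations for Conjunctive Queries".
-/

/-- A relational schema: a finite set of relation symbols, each with an arity. -/
structure Schema where
  Rel : Type
  rel_finite : Finite Rel
  arity : Rel → ℕ

/-- A fact (atom) over schema `σ`, with arguments (constants/variables) from `α`. -/
structure Atom (σ : Schema) (α : Type) where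
  rel : σ.Rel
  args : Fin (σ.arity rel) → α

/-- A database instance over `σ` with elements from `α`: a set of facts.
    (Finiteness or countability is imposed separately where needed.) -/
abbrev DB (σ : Schema) (α : Type) := Set (Atom σ α)

/-- Applying a map on elements to a fact. -/
def Atom.map {σ : Schema} {α β : Type} (h : α → β) (f : Atom σ α) : Atom σ β :=
  ⟨f.rel, fun i => h (f.args i)⟩

/-- `h` is a homomorphism from `D` to `D'`. -/
def IsHom {σ : Schema} {α β : Type} (h : α → β) (D : DB σ α) (D' : DB σ β) : Prop :=
  ∀ f ∈ D, f.map h ∈ D'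

/-- `(D, a) → (D', b)`: there is a homomorphism from `D` to `D'` mapping `a` to `b`. -/
def HomTup {σ : Schema} {α β : Type} {n : ℕ} (D : DB σ α) (a : Fin n → α)
    (D' : DB σ β) (b : Fin n → β) : Prop :=
  ∃ h : α → β, IsHom h D D' ∧ ∀ i, h (a i) = b i

/-- The active domain of a database: the elements appearing in its facts. -/
def adom {σ : Schema} {α : Type} (D : DB σ α) : Set α :=
  ⋃ f ∈ D, Set.range f.args

/-- A tree decomposition of a set of atoms `A` with respect to the set `E` of
    existentially quantified variables: a (possibly infinite) tree `T` together
    with bags `bag t ⊆ E` such that the existential variables of every atom are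
    contained in some bag, and for every existential variable the set of nodes
    whose bag contains it induces a connected subtree. -/
structure TreeDecomp {σ : Schema} {V : Type} (A : DB σ V) (E : Set V) where
  node : Type
  T : SimpleGraph node
  isTree : T.IsTree
  bag : node → Set V
  bag_sub : ∀ t, bag t ⊆ E
  covers : ∀ f ∈ A, ∃ t, Set.range f.args ∩ E ⊆ bag t
  conn : ∀ y ∈ E, (SimpleGraph.induce {t | y ∈ bag t} T).Connected

/-- The decomposition has width at most `k`: every bag is covered by at most
    `k` atoms of `A`. -/
def TreeDecomp.widthLE {σ : Schema} {V : Type} {A : DB σ V} {E : Set V}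
    (td : TreeDecomp A E) (k : ℕ) : Prop :=
  ∀ t, ∃ S : Finset (Atom σ V), ↑S ⊆ A ∧ S.card ≤ k ∧
    td.bag t ⊆ ⋃ f ∈ (S : Set (Atom σ V)), Set.range f.args

/-- The atoms `A` (with existential variables `E`) have generalized
    hypertreewidth at most `k`. -/
def ghwAuxLE {σ : Schema} {V : Type} (A : DB σ V) (E : Set V) (k : ℕ) : Prop :=
  ∃ td : TreeDecomp A E, td.widthLE k

/-- A conjunctive query over `σ` with `n` free variables: a finite set of atoms
    over a type of variables, together with the tuple of free variables.
    Its canonical database is `atoms`. -/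
structure CQ (σ : Schema) (n : ℕ) where
  Var : Type
  atoms : DB σ Var
  free : Fin n → Var
  finAtoms : atoms.Finite

namespace CQ

variable {σ : Schema} {n : ℕ}

/-- The existentially quantified variables of a CQ: variables occurring in its
    atoms that are not free. -/
def existVars (q : CQ σ n) : Set q.Var := adom q.atoms \ Set.range q.free

/-- `q` has generalized hypertreewidth at most `k`, i.e. `q ∈ GHW(k)`. -/
def ghwLE (q : CQ σ n) (k : ℕ) : Prop := ghwAuxLE q.atoms q.existVars k

/-- The result of evaluating `q` over a database `D` (with constants from `ℕ`):
    all tuples of elements of `D` to which the canonical database of `q` maps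
    homomorphically (sending the free variables to the tuple). -/
def eval (q : CQ σ n) (D : DB σ ℕ) : Set (Fin n → ℕ) :=
  {a | (∀ i, a i ∈ adom D) ∧ HomTup q.atoms q.free D a}

/-- Containment of CQs: `q ⊆ q'`, i.e. `q(D) ⊆ q'(D)` for every (finite) database. -/
def le (q q' : CQ σ n) : Prop :=
  ∀ D : DB σ ℕ, D.Finite → q.eval D ⊆ q'.eval D

/-- Equivalence of CQs: mutual containment. -/
def equiv (q q' : CQ σ n) : Prop := q.le q' ∧ q'.le q

end CQ

/-- `q'` is a `GHW(k)`-overapproximation of `q`: `q' ∈ GHW(k)`, `q ⊆ q'`, and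
    there is no `q'' ∈ GHW(k)` with `q ⊆ q'' ⊆ q'` and `q'' ≢ q'`. -/
def IsOverapprox {σ : Schema} {n : ℕ} (k : ℕ) (q q' : CQ σ n) : Prop :=
  q'.ghwLE k ∧ q.le q' ∧
    ¬ ∃ q'' : CQ σ n, q''.ghwLE k ∧ q.le q'' ∧ q''.le q' ∧ ¬ q''.equiv q'

/-- `q'` is a `GHW(k)`-underapproximation of `q`: `q' ∈ GHW(k)`, `q' ⊆ q`, and
    there is no `q'' ∈ GHW(k)` with `q' ⊆ q'' ⊆ q` and `q'' ≢ q'`. -/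
def IsUnderapprox {σ : Schema} {n : ℕ} (k : ℕ) (q q' : CQ σ n) : Prop :=
  q'.ghwLE k ∧ q'.le q ∧
    ¬ ∃ q'' : CQ σ n, q''.ghwLE k ∧ q'.le q'' ∧ q''.le q ∧ ¬ q''.equiv q'

/-- `q' ⊑_q q''`: the symmetric difference of `q''` and `q` is contained in the
    symmetric difference of `q'` and `q`, over every (finite) database. -/
def deltaLE {σ : Schema} {n : ℕ} (q q' q'' : CQ σ n) : Prop :=
  ∀ D : DB σ ℕ, D.Finite →
    symmDiff (q.eval D) (q''.eval D) ⊆ symmDiff (q.eval D) (q'.eval D)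

/-- `q'` is a `GHW(k)`-Δ-approximation of `q`: `q' ∈ GHW(k)` and `q'` is maximal
    with respect to the partial order `⊑_q` on `GHW(k)`. -/
def IsDeltaApprox {σ : Schema} {n : ℕ} (k : ℕ) (q q' : CQ σ n) : Prop :=
  q'.ghwLE k ∧
    ¬ ∃ q'' : CQ σ n, q''.ghwLE k ∧ deltaLE q q' q'' ∧ ¬ deltaLE q q'' q'

/-- `U` is covered by at most `k` atoms of `D`. -/
def kCovered {σ : Schema} {α : Type} (k : ℕ) (D : DB σ α) (U : Set α) : Prop :=
  ∃ S : Finset (Atom σ α), ↑S ⊆ D ∧ S.card ≤ k ∧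
    U ⊆ ⋃ f ∈ (S : Set (Atom σ α)), Set.range f.args

/-- `U` is a `k`-union of `D`: the union of the element sets of at most `k`
    atoms of `D`. -/
def kUnion {σ : Schema} {α : Type} (k : ℕ) (D : DB σ α) (U : Set α) : Prop :=
  ∃ S : Finset (Atom σ α), ↑S ⊆ D ∧ S.card ≤ k ∧
    U = ⋃ f ∈ (S : Set (Atom σ α)), Set.range f.args

/-- The map `h` on the pebbled set `U`, extended by `a ↦ b` on the distinguished
    tuples, is a partial homomorphism from `D` to `D'`: `h` sends `a` to `b` and
    every fact of `D` whose elements lie in `U ∪ range a` to a fact of `D'`. -/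
def PartialOk {σ : Schema} {α β : Type} {n : ℕ} (D : DB σ α) (D' : DB σ β)
    (a : Fin n → α) (b : Fin n → β) (U : Set α) (h : α → β) : Prop :=
  (∀ i, h (a i) = b i) ∧
  ∀ f ∈ D, Set.range f.args ⊆ U ∪ Set.range a → f.map h ∈ D'

/-- `(D, a) →_k (D', b)`: Duplicator has a winning strategy in the existential
    `k`-cover game on `(D, a)` and `(D', b)`, presented as a nonempty family of
    positions (pebbled set + partial homomorphism) that is closed under
    Spoiler placing a pebble (provided the pebbled elements stay covered by at
    most `k` atoms of `D`) and under removing pebbles. -/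
def PebbleWin {σ : Schema} {α β : Type} {n : ℕ} (k : ℕ) (D : DB σ α) (a : Fin n → α)
    (D' : DB σ β) (b : Fin n → β) : Prop :=
  ∃ F : Set (Set α × (α → β)),
    (∃ h, (∅, h) ∈ F) ∧
    (∀ p ∈ F, kCovered k D p.1 ∧ PartialOk D D' a b p.1 p.2) ∧
    (∀ p ∈ F, ∀ c : α, kCovered k D (insert c p.1) →
      ∃ p' ∈ F, p'.1 = insert c p.1 ∧ ∀ x ∈ p.1, p'.2 x = p.2 x) ∧
    (∀ p ∈ F, ∀ U, U ⊆ p.1 → ∃ p' ∈ F, p'.1 = U ∧ ∀ x ∈ U, p'.2 x = p.2 x)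

/-- Duplicator can survive `c` more rounds of the compact existential `k`-cover
    game from the position with pebbled set `U` and partial map `h`: whatever
    `k`-union `U'` Spoiler plays next, Duplicator has a consistent partial
    homomorphism on `U'` from which she can survive `c - 1` more rounds. -/
def WinRounds {σ : Schema} {α β : Type} {n : ℕ} (k : ℕ) (D : DB σ α) (a : Fin n → α)
    (D' : DB σ β) (b : Fin n → β) : ℕ → Set α → (α → β) → Prop
  | 0, _, _ => True
  | c + 1, U, h => ∀ U', kUnion k D U' →
      ∃ h', (∀ x ∈ U ∩ U', h' x = h x) ∧ PartialOk D D' a b U' h' ∧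
        WinRounds k D a D' b c U' h'

/-- `(D, a) →_k^c (D', b)`: Duplicator has a winning strategy in the first `c`
    rounds of the compact existential `k`-cover game on `(D, a)` and `(D', b)`. -/
def PebbleWinC {σ : Schema} {α β : Type} {n : ℕ} (k c : ℕ) (D : DB σ α) (a : Fin n → α)
    (D' : DB σ β) (b : Fin n → β) : Prop :=
  ∃ h0, PartialOk D D' a b ∅ h0 ∧ WinRounds k D a D' b c ∅ h0

/-- The Gaifman graph of a set of atoms `A`: vertices are elements, with an edge
    between two distinct elements that occur together in some atom of `A`. -/
def gaifmanOf {σ : Schema} {V : Type} (A : DB σ V) : SimpleGraph V where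
  Adj z z' := z ≠ z' ∧ ∃ f ∈ A, z ∈ Set.range f.args ∧ z' ∈ Set.range f.args
  symm := by
    constructor
    rintro z z' ⟨hne, f, hf, hz, hz'⟩
    exact ⟨hne.symm, f, hf, hz', hz⟩
  loopless := by
    constructor
    rintro z ⟨hne, -⟩
    exact hne rfl

/-- A Boolean CQ is connected if its Gaifman graph (on the variables occurring
    in it) is connected. -/
def CQ.IsConnected {σ : Schema} (q : CQ σ 0) : Prop :=
  (SimpleGraph.induce (adom q.atoms) (gaifmanOf q.atoms)).Connected

/-- `q` is a core: no CQ with fewer atoms is (homomorphically) equivalent to it. -/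
def IsCore {σ : Schema} {n : ℕ} (q : CQ σ n) : Prop :=
  ∀ q' : CQ σ n, HomTup q.atoms q.free q'.atoms q'.free →
    HomTup q'.atoms q'.free q.atoms q.free →
    q.atoms.ncard ≤ q'.atoms.ncard

open SimpleGraph

variable {A B : Type}

/-- Join of two graphs on a sum type by a bridge edge between `t1` and `t2`. -/
def sumJoin (T1 : SimpleGraph A) (T2 : SimpleGraph B) (t1 : A) (t2 : B) :
    SimpleGraph (A ⊕ B) where
  Adj x y :=
    (∃ a a', x = .inl a ∧ y = .inl a' ∧ T1.Adj a a') ∨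
    (∃ b b', x = .inr b ∧ y = .inr b' ∧ T2.Adj b b') ∨
    (x = .inl t1 ∧ y = .inr t2) ∨ (x = .inr t2 ∧ y = .inl t1)
  symm := by
    constructor
    rintro x y (⟨a, a', rfl, rfl, h⟩ | ⟨b, b', rfl, rfl, h⟩ | ⟨rfl, rfl⟩ | ⟨rfl, rfl⟩)
    · exact Or.inl ⟨a', a, rfl, rfl, h.symm⟩
    · exact Or.inr (Or.inl ⟨b', b, rfl, rfl, h.symm⟩)
    · exact Or.inr (Or.inr (Or.inr ⟨rfl, rfl⟩))
    · exact Or.inr (Or.inr (Or.inl ⟨rfl, rfl⟩))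
  loopless := by
    constructor
    rintro x (⟨a, a', rfl, h1, h⟩ | ⟨b, b', rfl, h1, h⟩ | ⟨rfl, h⟩ | ⟨rfl, h⟩)
    · exact T1.loopless.irrefl a (by cases h1; exact h)
    · exact T2.loopless.irrefl b (by cases h1; exact h)
    · simp at h
    · simp at h

variable {T1 : SimpleGraph A} {T2 : SimpleGraph B} {t1 : A} {t2 : B}

def sumJoinHoml : T1 →g sumJoin T1 T2 t1 t2 :=
  ⟨Sum.inl, fun h => Or.inl ⟨_, _, rfl, rfl, h⟩⟩

def sumJoinHomr : T2 →g sumJoin T1 T2 t1 t2 :=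
  ⟨Sum.inr, fun h => Or.inr (Or.inl ⟨_, _, rfl, rfl, h⟩)⟩

lemma sumJoin_connected (h1 : T1.Connected) (h2 : T2.Connected) :
    (sumJoin T1 T2 t1 t2).Connected := by
  rw [connected_iff]
  refine ⟨fun x y => ?_, ⟨Sum.inl t1⟩⟩
  have hadj : (sumJoin T1 T2 t1 t2).Adj (Sum.inl t1) (Sum.inr t2) :=
    Or.inr (Or.inr (Or.inl ⟨rfl, rfl⟩))
  have key : ∀ z : A ⊕ B, (sumJoin T1 T2 t1 t2).Reachable (Sum.inl t1) z := by
    rintro (a | b)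
    · exact (h1 t1 a).map sumJoinHoml
    · exact hadj.reachable.trans ((h2 t2 b).map sumJoinHomr)
  exact (key x).symm.trans (key y)

/-- Lift a walk avoiding the bridge edge, with left endpoints, to `T1`. -/
lemma sumJoin_lift_left :
    ∀ {x y : A ⊕ B} (p : (sumJoin T1 T2 t1 t2).Walk x y),
      s(Sum.inl t1, Sum.inr t2) ∉ p.edges → ∀ {a b : A}, x = Sum.inl a → y = Sum.inl b →
      ∃ q : T1.Walk a b, p.edges = q.edges.map (Sym2.map Sum.inl) ∧
        p.support = q.support.map Sum.inl := by
  intro x y p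
  induction p with
  | nil =>
    rintro - a b rfl hy
    cases Sum.inl_injective hy
    exact ⟨Walk.nil, by simp, by simp⟩
  | @cons u v w h p ih =>
    intro hne a b hu hw
    subst hu
    have hv : ∃ a' : A, v = Sum.inl a' ∧ T1.Adj a a' := by
      rcases h with (⟨a0, a', h1, rfl, hadj⟩ | ⟨b0, b', h1, h2, hadj⟩ | ⟨h1, rfl⟩ | ⟨h1, h2⟩)
      · cases Sum.inl_injective h1; exact ⟨a', rfl, hadj⟩
      · exact absurd h1 (by simp)
      · exfalso; apply hne; cases Sum.inl_injective h1
        exact List.mem_cons_self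
      · exact absurd h1 (by simp)
    obtain ⟨a', rfl, hadj⟩ := hv
    have hne' : s(Sum.inl t1, Sum.inr t2) ∉ p.edges := fun hmem =>
      hne (by rw [Walk.edges_cons]; exact List.mem_cons_of_mem _ hmem)
    obtain ⟨q, hq1, hq2⟩ := ih hne' rfl hw
    exact ⟨Walk.cons hadj q, by simp [hq1], by simp [hq2]⟩

lemma sumJoin_lift_right :
    ∀ {x y : A ⊕ B} (p : (sumJoin T1 T2 t1 t2).Walk x y),
      s(Sum.inl t1, Sum.inr t2) ∉ p.edges → ∀ {a b : B}, x = Sum.inr a → y = Sum.inr b →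
      ∃ q : T2.Walk a b, p.edges = q.edges.map (Sym2.map Sum.inr) ∧
        p.support = q.support.map Sum.inr := by
  intro x y p
  induction p with
  | nil =>
    rintro - a b rfl hy
    cases Sum.inr_injective hy
    exact ⟨Walk.nil, by simp, by simp⟩
  | @cons u v w h p ih =>
    intro hne a b hu hw
    subst hu
    have hv : ∃ a' : B, v = Sum.inr a' ∧ T2.Adj a a' := by
      rcases h with (⟨a0, a', h1, h2, hadj⟩ | ⟨b0, b', h1, rfl, hadj⟩ | ⟨h1, h2⟩ | ⟨h1, rfl⟩)
      · exact absurd h1 (by simp)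
      · cases Sum.inr_injective h1; exact ⟨b', rfl, hadj⟩
      · exact absurd h1 (by simp)
      · exfalso; apply hne; cases Sum.inr_injective h1
        have he : s(Sum.inl t1, Sum.inr t2) = s(Sum.inr t2, Sum.inl t1) := Sym2.eq_swap
        rw [he]; exact List.mem_cons_self
    obtain ⟨a', rfl, hadj⟩ := hv
    have hne' : s(Sum.inl t1, Sum.inr t2) ∉ p.edges := fun hmem =>
      hne (by rw [Walk.edges_cons]; exact List.mem_cons_of_mem _ hmem)
    obtain ⟨q, hq1, hq2⟩ := ih hne' rfl hw
    exact ⟨Walk.cons hadj q, by simp [hq1], by simp [hq2]⟩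

open Classical in
/-- Parity: a walk's endpoints are on the same side iff it crosses the bridge
    an even number of times. -/
lemma sumJoin_parity :
    ∀ {x y : A ⊕ B} (p : (sumJoin T1 T2 t1 t2).Walk x y),
      (x.isLeft = y.isLeft) ↔ Even (p.edges.count s(Sum.inl t1, Sum.inr t2)) := by
  intro x y p
  induction p with
  | nil => simp
  | @cons u v w h p ih =>
    rw [Walk.edges_cons, List.count_cons]
    rcases h with (⟨a, a', rfl, rfl, hadj⟩ | ⟨b, b', rfl, rfl, hadj⟩ | ⟨rfl, rfl⟩ | ⟨rfl, rfl⟩)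
    · have : (s(Sum.inl a, Sum.inl a') == s(Sum.inl t1, Sum.inr t2)) = false := by
        simp [Sym2.eq_iff]
      rw [this]
      simpa using ih
    · have : (s(Sum.inr b, Sum.inr b') == s(Sum.inl t1, Sum.inr t2)) = false := by
        simp [Sym2.eq_iff]
      rw [this]
      simpa using ih
    · have : (s(Sum.inl t1, Sum.inr t2) == s(Sum.inl t1, Sum.inr t2)) = true := by simp
      rw [this, if_pos rfl, Nat.even_add_one, ← ih]
      simp only [Sum.isLeft_inl, Sum.isLeft_inr]
      cases w.isLeft <;> simp
    · have : (s(Sum.inr t2, Sum.inl t1) == s(Sum.inl t1, Sum.inr t2)) = true := by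
        simp [Sym2.eq_iff]
      rw [this, if_pos rfl, Nat.even_add_one, ← ih]
      simp only [Sum.isLeft_inl, Sum.isLeft_inr]
      cases w.isLeft <;> simp

open Classical in
lemma sumJoin_cycle_no_bridge {v : A ⊕ B} (c : (sumJoin T1 T2 t1 t2).Walk v v)
    (hc : c.IsCycle) : s(Sum.inl t1, Sum.inr t2) ∉ c.edges := by
  intro hmem
  have heven : Even (c.edges.count s(Sum.inl t1, Sum.inr t2)) :=
    (sumJoin_parity c).mp rfl
  rw [List.count_eq_one_of_mem hc.edges_nodup hmem] at heven
  simp at heven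

lemma sumJoin_isTree (h1 : T1.IsTree) (h2 : T2.IsTree) :
    (sumJoin T1 T2 t1 t2).IsTree := by
  constructor
  · exact sumJoin_connected h1.isConnected h2.isConnected
  · intro v c hc
    have hnb := sumJoin_cycle_no_bridge c hc
    match v with
    | Sum.inl a =>
      obtain ⟨q, hq1, hq2⟩ := sumJoin_lift_left c hnb rfl rfl
      refine h1.IsAcyclic q ⟨⟨⟨?_⟩, ?_⟩, ?_⟩
      · exact List.Nodup.of_map _ (hq1 ▸ hc.edges_nodup)
      · rintro rfl
        exact hc.ne_nil (by cases c <;> simp_all)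
      · have := hc.support_nodup
        rw [hq2] at this
        rw [← List.map_tail] at this
        exact List.Nodup.of_map _ this
    | Sum.inr b =>
      obtain ⟨q, hq1, hq2⟩ := sumJoin_lift_right c hnb rfl rfl
      refine h2.IsAcyclic q ⟨⟨⟨?_⟩, ?_⟩, ?_⟩
      · exact List.Nodup.of_map _ (hq1 ▸ hc.edges_nodup)
      · rintro rfl
        exact hc.ne_nil (by cases c <;> simp_all)
      · have := hc.support_nodup
        rw [hq2] at this
        rw [← List.map_tail] at this
        exact List.Nodup.of_map _ this


section Conj

variable {σ : Schema} {n : ℕ} (q1 q2 : CQ σ n)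

/-- Relation on free-variable positions identified by `q1` or `q2`. -/
def frel : Fin n → Fin n → Prop := fun i j => q1.free i = q1.free j ∨ q2.free i = q2.free j

/-- The setoid generated by `frel`. -/
def fsetoid : Setoid (Fin n) := Relation.EqvGen.setoid (frel q1 q2)

/-- Variables of the conjunction of `q1` and `q2`. -/
abbrev CVar := Quotient (fsetoid q1 q2) ⊕ (q1.Var ⊕ q2.Var)

open Classical in
noncomputable def rr1 : q1.Var → CVar q1 q2 := fun v =>
  if h : ∃ i, q1.free i = v then Sum.inl (Quotient.mk (fsetoid q1 q2) h.choose)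
  else Sum.inr (Sum.inl v)

open Classical in
noncomputable def rr2 : q2.Var → CVar q1 q2 := fun v =>
  if h : ∃ i, q2.free i = v then Sum.inl (Quotient.mk (fsetoid q1 q2) h.choose)
  else Sum.inr (Sum.inr v)

/-- The conjunction `q1 ∧ q2` as a CQ. -/
noncomputable def conjCQ : CQ σ n where
  Var := CVar q1 q2
  atoms := (Atom.map (rr1 q1 q2)) '' q1.atoms ∪ (Atom.map (rr2 q1 q2)) '' q2.atoms
  free := fun i => Sum.inl (Quotient.mk (fsetoid q1 q2) i)
  finAtoms := (q1.finAtoms.image _).union (q2.finAtoms.image _)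

lemma rr1_free (i : Fin n) :
    rr1 q1 q2 (q1.free i) = Sum.inl (Quotient.mk (fsetoid q1 q2) i) := by
  have h : ∃ j, q1.free j = q1.free i := ⟨i, rfl⟩
  rw [rr1, dif_pos h]
  exact congrArg Sum.inl (Quotient.sound (Relation.EqvGen.rel _ _ (Or.inl h.choose_spec)))

lemma rr2_free (i : Fin n) :
    rr2 q1 q2 (q2.free i) = Sum.inl (Quotient.mk (fsetoid q1 q2) i) := by
  have h : ∃ j, q2.free j = q2.free i := ⟨i, rfl⟩
  rw [rr2, dif_pos h]
  exact congrArg Sum.inl (Quotient.sound (Relation.EqvGen.rel _ _ (Or.inr h.choose_spec)))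

lemma rr1_nonfree {v : q1.Var} (h : ¬∃ i, q1.free i = v) :
    rr1 q1 q2 v = Sum.inr (Sum.inl v) := by rw [rr1, dif_neg h]

lemma rr2_nonfree {v : q2.Var} (h : ¬∃ i, q2.free i = v) :
    rr2 q1 q2 v = Sum.inr (Sum.inr v) := by rw [rr2, dif_neg h]

lemma mem_adom_iff {α : Type} {D : DB σ α} {v : α} :
    v ∈ adom D ↔ ∃ f ∈ D, v ∈ Set.range f.args := by
  simp [adom]

lemma conj_le_q1 : (conjCQ q1 q2).le q1 := by
  rintro D hD a ⟨hadom, H, hhom, hfree⟩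
  refine ⟨hadom, fun v => H (rr1 q1 q2 v), ?_, ?_⟩
  · intro f hf
    exact hhom (f.map (rr1 q1 q2)) (Or.inl ⟨f, hf, rfl⟩)
  · intro i
    show H (rr1 q1 q2 (q1.free i)) = a i
    rw [rr1_free]
    exact hfree i

lemma conj_le_q2 : (conjCQ q1 q2).le q2 := by
  rintro D hD a ⟨hadom, H, hhom, hfree⟩
  refine ⟨hadom, fun v => H (rr2 q1 q2 v), ?_, ?_⟩
  · intro f hf
    exact hhom (f.map (rr2 q1 q2)) (Or.inr ⟨f, hf, rfl⟩)
  · intro i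
    show H (rr2 q1 q2 (q2.free i)) = a i
    rw [rr2_free]
    exact hfree i

lemma mem_eval_conj {D : DB σ ℕ} {a : Fin n → ℕ}
    (ha1 : a ∈ q1.eval D) (ha2 : a ∈ q2.eval D) : a ∈ (conjCQ q1 q2).eval D := by
  obtain ⟨hadom, h1, hhom1, hfree1⟩ := ha1
  obtain ⟨-, h2, hhom2, hfree2⟩ := ha2
  have hresp : ∀ i j, Relation.EqvGen (frel q1 q2) i j → a i = a j := by
    intro i j h
    induction h with
    | rel i j h =>
      rcases h with h | h
      · rw [← hfree1 i, ← hfree1 j, h]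
      · rw [← hfree2 i, ← hfree2 j, h]
    | refl => rfl
    | symm _ _ _ ih => exact ih.symm
    | trans _ _ _ _ _ ih1 ih2 => exact ih1.trans ih2
  refine ⟨hadom, Sum.elim (Quotient.lift a hresp) (Sum.elim h1 h2), ?_, fun i => rfl⟩
  have key1 : ∀ v, Sum.elim (Quotient.lift a hresp) (Sum.elim h1 h2) (rr1 q1 q2 v) = h1 v := by
    intro v
    by_cases h : ∃ i, q1.free i = v
    · rw [rr1, dif_pos h]
      show a h.choose = h1 v
      have := hfree1 h.choose
      rw [h.choose_spec] at this
      exact this.symm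
    · rw [rr1_nonfree _ _ h]
      rfl
  have key2 : ∀ v, Sum.elim (Quotient.lift a hresp) (Sum.elim h1 h2) (rr2 q1 q2 v) = h2 v := by
    intro v
    by_cases h : ∃ i, q2.free i = v
    · rw [rr2, dif_pos h]
      show a h.choose = h2 v
      have := hfree2 h.choose
      rw [h.choose_spec] at this
      exact this.symm
    · rw [rr2_nonfree _ _ h]
      rfl
  rintro g (⟨f, hf, rfl⟩ | ⟨f, hf, rfl⟩)
  · have : (f.map (rr1 q1 q2)).map (Sum.elim (Quotient.lift a hresp) (Sum.elim h1 h2))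
        = f.map h1 := by
      show Atom.mk f.rel _ = Atom.mk f.rel _
      congr 1
      funext i
      exact key1 (f.args i)
    exact (congrArg (· ∈ D) this).mpr (hhom1 f hf)
  · have : (f.map (rr2 q1 q2)).map (Sum.elim (Quotient.lift a hresp) (Sum.elim h1 h2))
        = f.map h2 := by
      show Atom.mk f.rel _ = Atom.mk f.rel _
      congr 1
      funext i
      exact key2 (f.args i)
    exact (congrArg (· ∈ D) this).mpr (hhom2 f hf)

lemma rr1_mem_existVars {w : q1.Var} (hw : w ∈ q1.existVars) :
    Sum.inr (Sum.inl w) ∈ (conjCQ q1 q2).existVars := by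
  obtain ⟨hadom, hnf⟩ := hw
  have hnf' : ¬∃ i, q1.free i = w := fun ⟨i, hi⟩ => hnf ⟨i, hi⟩
  obtain ⟨f, hf, i, hi⟩ := mem_adom_iff.mp hadom
  constructor
  · refine mem_adom_iff.mpr ⟨f.map (rr1 q1 q2), Or.inl ⟨f, hf, rfl⟩, i, ?_⟩
    show rr1 q1 q2 (f.args i) = _
    rw [hi, rr1_nonfree _ _ hnf']
  · rintro ⟨j, hj⟩
    exact Sum.inl_ne_inr hj

lemma rr2_mem_existVars {w : q2.Var} (hw : w ∈ q2.existVars) :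
    Sum.inr (Sum.inr w) ∈ (conjCQ q1 q2).existVars := by
  obtain ⟨hadom, hnf⟩ := hw
  have hnf' : ¬∃ i, q2.free i = w := fun ⟨i, hi⟩ => hnf ⟨i, hi⟩
  obtain ⟨f, hf, i, hi⟩ := mem_adom_iff.mp hadom
  constructor
  · refine mem_adom_iff.mpr ⟨f.map (rr2 q1 q2), Or.inr ⟨f, hf, rfl⟩, i, ?_⟩
    show rr2 q1 q2 (f.args i) = _
    rw [hi, rr2_nonfree _ _ hnf']
  · rintro ⟨j, hj⟩
    exact Sum.inl_ne_inr hj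

lemma conj_ghw (hg1 : q1.ghwLE k) (hg2 : q2.ghwLE k) : (conjCQ q1 q2).ghwLE k := by
  classical
  obtain ⟨td1, hw1⟩ := hg1
  obtain ⟨td2, hw2⟩ := hg2
  obtain ⟨t1⟩ : Nonempty td1.node := td1.isTree.isConnected.nonempty
  obtain ⟨t2⟩ : Nonempty td2.node := td2.isTree.isConnected.nonempty
  refine ⟨⟨td1.node ⊕ td2.node, sumJoin td1.T td2.T t1 t2,
    sumJoin_isTree td1.isTree td2.isTree,
    Sum.elim (fun t => (fun w => Sum.inr (Sum.inl w)) '' td1.bag t)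
      (fun t => (fun w => Sum.inr (Sum.inr w)) '' td2.bag t), ?_, ?_, ?_⟩, ?_⟩
  · rintro (t | t) x hx
    · obtain ⟨w, hw, rfl⟩ := hx
      exact rr1_mem_existVars q1 q2 (td1.bag_sub t hw)
    · obtain ⟨w, hw, rfl⟩ := hx
      exact rr2_mem_existVars q1 q2 (td2.bag_sub t hw)
  · rintro g (⟨f, hf, rfl⟩ | ⟨f, hf, rfl⟩)
    · obtain ⟨t, ht⟩ := td1.covers f hf
      refine ⟨Sum.inl t, ?_⟩
      rintro x ⟨⟨i, hi⟩, hxE⟩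
      by_cases h : ∃ j, q1.free j = f.args i
      · exfalso
        apply hxE.2
        refine ⟨h.choose, ?_⟩
        show Sum.inl _ = x
        rw [← hi]
        show Sum.inl _ = rr1 q1 q2 (f.args i)
        rw [rr1, dif_pos h]
      · have hx : x = Sum.inr (Sum.inl (f.args i)) := by
          rw [← hi]; exact (rr1_nonfree q1 q2 h)
        have hmem : f.args i ∈ Set.range f.args ∩ q1.existVars := by
          refine ⟨⟨i, rfl⟩, mem_adom_iff.mpr ⟨f, hf, i, rfl⟩, ?_⟩
          rintro ⟨j, hj⟩
          exact h ⟨j, hj⟩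
        exact ⟨f.args i, ht hmem, hx.symm⟩
    · obtain ⟨t, ht⟩ := td2.covers f hf
      refine ⟨Sum.inr t, ?_⟩
      rintro x ⟨⟨i, hi⟩, hxE⟩
      by_cases h : ∃ j, q2.free j = f.args i
      · exfalso
        apply hxE.2
        refine ⟨h.choose, ?_⟩
        show Sum.inl _ = x
        rw [← hi]
        show Sum.inl _ = rr2 q1 q2 (f.args i)
        rw [rr2, dif_pos h]
      · have hx : x = Sum.inr (Sum.inr (f.args i)) := by
          rw [← hi]; exact (rr2_nonfree q1 q2 h)
        have hmem : f.args i ∈ Set.range f.args ∩ q2.existVars := by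
          refine ⟨⟨i, rfl⟩, mem_adom_iff.mpr ⟨f, hf, i, rfl⟩, ?_⟩
          rintro ⟨j, hj⟩
          exact h ⟨j, hj⟩
        exact ⟨f.args i, ht hmem, hx.symm⟩
  · -- connectivity
    intro y hy
    -- determine which side y lives on
    obtain ⟨hyadom, hynf⟩ := hy
    obtain ⟨g, hg, i, hi⟩ := mem_adom_iff.mp hyadom
    rcases hg with ⟨f, hf, rfl⟩ | ⟨f, hf, rfl⟩
    · -- y comes from q1
      have hnf : ¬∃ j, q1.free j = f.args i := by
        rintro h
        apply hynf
        refine ⟨h.choose, ?_⟩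
        rw [← hi]
        show Sum.inl _ = rr1 q1 q2 (f.args i)
        rw [rr1, dif_pos h]
      have hy' : y = Sum.inr (Sum.inl (f.args i)) := by
        rw [← hi]; exact rr1_nonfree q1 q2 hnf
      set w := f.args i with hwdef
      have hwE : w ∈ q1.existVars := by
        refine ⟨mem_adom_iff.mpr ⟨f, hf, i, rfl⟩, ?_⟩
        rintro ⟨j, hj⟩
        exact hnf ⟨j, hj⟩
      have hconn := td1.conn w hwE
      refine hconn.map ⟨fun t => ⟨Sum.inl t.1, ⟨w, t.2, hy'.symm⟩⟩, ?_⟩ ?_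
      · intro s t hst
        exact Or.inl ⟨s.1, t.1, rfl, rfl, hst⟩
      · rintro ⟨(t | t), ht⟩
        · obtain ⟨w', hw', hw'eq⟩ := ht
          have : w' = w := by
            rw [hy'] at hw'eq
            exact Sum.inl_injective (Sum.inr_injective hw'eq)
          exact ⟨⟨t, this ▸ hw'⟩, rfl⟩
        · obtain ⟨w', hw', hw'eq⟩ := ht
          rw [hy'] at hw'eq
          exact absurd (Sum.inr_injective hw'eq) (by simp)
    · -- y comes from q2
      have hnf : ¬∃ j, q2.free j = f.args i := by
        rintro h
        apply hynf
        refine ⟨h.choose, ?_⟩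
        rw [← hi]
        show Sum.inl _ = rr2 q1 q2 (f.args i)
        rw [rr2, dif_pos h]
      have hy' : y = Sum.inr (Sum.inr (f.args i)) := by
        rw [← hi]; exact rr2_nonfree q1 q2 hnf
      set w := f.args i with hwdef
      have hwE : w ∈ q2.existVars := by
        refine ⟨mem_adom_iff.mpr ⟨f, hf, i, rfl⟩, ?_⟩
        rintro ⟨j, hj⟩
        exact hnf ⟨j, hj⟩
      have hconn := td2.conn w hwE
      refine hconn.map ⟨fun t => ⟨Sum.inr t.1, ⟨w, t.2, hy'.symm⟩⟩, ?_⟩ ?_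
      · intro s t hst
        exact Or.inr (Or.inl ⟨s.1, t.1, rfl, rfl, hst⟩)
      · rintro ⟨(t | t), ht⟩
        · obtain ⟨w', hw', hw'eq⟩ := ht
          rw [hy'] at hw'eq
          exact absurd (Sum.inr_injective hw'eq) (by simp)
        · obtain ⟨w', hw', hw'eq⟩ := ht
          have : w' = w := by
            rw [hy'] at hw'eq
            exact Sum.inr_injective (Sum.inr_injective hw'eq)
          exact ⟨⟨t, this ▸ hw'⟩, rfl⟩
  · -- width
    rintro (t | t)
    · obtain ⟨S, hS, hcard, hcov⟩ := hw1 t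
      refine ⟨S.image (Atom.map (rr1 q1 q2)), ?_, le_trans Finset.card_image_le hcard, ?_⟩
      · intro g hg
        simp only [Finset.coe_image, Set.mem_image] at hg
        obtain ⟨f, hf, rfl⟩ := hg
        exact Or.inl ⟨f, hS hf, rfl⟩
      · rintro x ⟨w, hw, rfl⟩
        have := hcov hw
        simp only [Set.mem_iUnion] at this ⊢
        obtain ⟨f, hf, i, hi⟩ := this
        refine Set.mem_iUnion₂.mpr ⟨f.map (rr1 q1 q2), ?_, i, ?_⟩
        · simp only [Finset.coe_image, Set.mem_image]
          exact ⟨f, hf, rfl⟩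
        · show rr1 q1 q2 (f.args i) = _
          rw [hi, rr1_nonfree]
          rintro ⟨j, hj⟩
          exact (td1.bag_sub t hw).2 ⟨j, hj⟩
    · obtain ⟨S, hS, hcard, hcov⟩ := hw2 t
      refine ⟨S.image (Atom.map (rr2 q1 q2)), ?_, le_trans Finset.card_image_le hcard, ?_⟩
      · intro g hg
        simp only [Finset.coe_image, Set.mem_image] at hg
        obtain ⟨f, hf, rfl⟩ := hg
        exact Or.inr ⟨f, hS hf, rfl⟩
      · rintro x ⟨w, hw, rfl⟩
        have := hcov hw
        simp only [Set.mem_iUnion] at this ⊢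
        obtain ⟨f, hf, i, hi⟩ := this
        refine Set.mem_iUnion₂.mpr ⟨f.map (rr2 q1 q2), ?_, i, ?_⟩
        · simp only [Finset.coe_image, Set.mem_image]
          exact ⟨f, hf, rfl⟩
        · show rr2 q1 q2 (f.args i) = _
          rw [hi, rr2_nonfree]
          rintro ⟨j, hj⟩
          exact (td2.bag_sub t hw).2 ⟨j, hj⟩

end Conj

/-- `GHW(k)`-overapproximations are unique up to equivalence. -/
theorem statement3 (σ : Schema) (k n : ℕ) (hk : 1 ≤ k) (q q1 q2 : CQ σ n)
    (h1 : IsOverapprox k q q1) (h2 : IsOverapprox k q q2) :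
    q1.equiv q2 := by
  obtain ⟨hg1, hle1, hmax1⟩ := h1
  obtain ⟨hg2, hle2, hmax2⟩ := h2
  have hqc : q.le (conjCQ q1 q2) := fun D hD a ha =>
    mem_eval_conj q1 q2 (hle1 D hD ha) (hle2 D hD ha)
  have hghw : (conjCQ q1 q2).ghwLE k := conj_ghw q1 q2 hg1 hg2
  have e1 : (conjCQ q1 q2).equiv q1 := by
    by_contra h
    exact hmax1 ⟨conjCQ q1 q2, hghw, hqc, conj_le_q1 q1 q2, h⟩
  have e2 : (conjCQ q1 q2).equiv q2 := by
    by_contra h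
    exact hmax2 ⟨conjCQ q1 q2, hghw, hqc, conj_le_q2 q1 q2, h⟩
  constructor
  · exact fun D hD => subset_trans (e1.2 D hD) (conj_le_q2 q1 q2 D hD)
  · exact fun D hD => subset_trans (e2.2 D hD) (conj_le_q1 q1 q2 D hD)
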